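/- Let (a_1,...,a_p) ∈ ℝ^p have characteristic roots strictly inside the unit circle, and let A be the (p+q-1)-square LODM state matrix with parameters (a_1,...,a_p,b_2,...,b_q). Then the spectral radius of A is strictly less than 1, and consequently for any vectors ω̄, b̄ ∈ ℝ^{p+q-1} and any bounded real sequence (u_k)_{k≤0}, the series Σ_{k=0}^∞ e_p^T A^k (ω̄ + u_{-k} b̄) converges absolutely. More generally it converges absolutely whenever |u_{-k}| = O(e^{αk}) for some α < -log(spectral radius of A). -/

import Mathlib

/-- The stability set `S_p`: coefficient vectors `(a_1,...,a_p)` (with `a k`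
standing for `a_{k+1}`) such that `1 - Σ_{k=1}^p a_k z^k` has no root in the
closed unit disk. -/
def memSp (p : ℕ) (a : ℕ → ℝ) : Prop :=
  ∀ z : ℂ, ‖z‖ ≤ 1 →
    (1 : ℂ) - ∑ k ∈ Finset.range p, (a k : ℂ) * z ^ (k + 1) ≠ 0

/-- The `(p+q-1)`-square state-space matrix of the LODM: row `p` (1-indexed) is
`(a_p,...,a_1,b_q,...,b_2)`, rows `1..p-1` and `p+1..p+q-2` are shift rows, the
last row is zero.  Here `a k` stands for `a_{k+1}` and `b k` for `b_{k+1}`. -/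
def bigA (p q : ℕ) (a b : ℕ → ℝ) : Matrix (Fin (p + q - 1)) (Fin (p + q - 1)) ℝ :=
  fun i j =>
    if i.val = p - 1 then
      (if j.val < p then a (p - 1 - j.val) else b (q - 1 - (j.val - p)))
    else if j.val = i.val + 1 then 1 else 0

/-- The vector `b̄ = b_1 e_p + e_{p+q-1}` of the LODM state-space form (reducing
to `b_1 e_p` when `q = 1`). -/
def bbar (p q : ℕ) (b1 : ℝ) : Fin (p + q - 1) → ℝ :=
  fun i => if i.val = p - 1 then b1 else if i.val = p + q - 2 then 1 else 0

/-- The vector `ω̄ = ω e_p` of the LODM state-space form. -/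
def omegabar (p q : ℕ) (ω : ℝ) : Fin (p + q - 1) → ℝ :=
  fun i => if i.val = p - 1 then ω else 0


open Matrix Filter

lemma lodm_spec_poly (p q : ℕ) (hp : 0 < p) (hq : 0 < q) (a b : ℕ → ℝ)
    (μ : ℂ) (hμ : μ ∈ spectrum ℂ ((bigA p q a b).map (fun x : ℝ => (x : ℂ))))
    (hμ0 : μ ≠ 0) :
    μ ^ p - ∑ k ∈ Finset.range p, (a k : ℂ) * μ ^ (p - 1 - k) = 0 := by
  set n := p + q - 1 with hn
  have hpn : p ≤ n := by omega
  set M := ((bigA p q a b).map (fun x : ℝ => (x : ℂ))) with hM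
  rw [← AlgEquiv.spectrum_eq (Matrix.toLinAlgEquiv' (R := ℂ) (n := Fin n)) M,
      ← Module.End.hasEigenvalue_iff_mem_spectrum] at hμ
  obtain ⟨v, hv⟩ := hμ.exists_hasEigenvector
  have hMv : M *ᵥ v = μ • v := hv.apply_eq_smul
  have hrow : ∀ i : Fin n, (∑ j : Fin n, M i j * v j) = μ * v i := by
    intro i
    have := congrFun hMv i
    simpa [Matrix.mulVec, dotProduct] using this
  set w : ℕ → ℂ := fun m => if h : m < n then v ⟨m, h⟩ else 0 with hw
  have hwlt : ∀ m (h : m < n), w m = v ⟨m, h⟩ := fun m h => dif_pos h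
  have hwge : ∀ m, n ≤ m → w m = 0 := fun m h => dif_neg (by omega)
  -- shift rows
  have eqshift : ∀ m (hmn : m < n), m ≠ p - 1 → μ * w m = w (m + 1) := by
    intro m hmn hmp
    have h1 := hrow ⟨m, hmn⟩
    have h2 : ∀ j : Fin n, M ⟨m, hmn⟩ j = if (j : ℕ) = m + 1 then 1 else 0 := by
      intro j
      simp only [hM, Matrix.map_apply, bigA, if_neg hmp]
      split <;> simp
    rw [Finset.sum_congr rfl (fun j _ => by rw [h2 j])] at h1
    have h3 : (∑ j : Fin n, (if (j : ℕ) = m + 1 then (1:ℂ) else 0) * v j) = w (m + 1) := by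
      by_cases h4 : m + 1 < n
      · rw [hwlt _ h4, Finset.sum_eq_single (⟨m + 1, h4⟩ : Fin n)]
        · simp
        · intro j _ hj
          rw [if_neg (fun hc => hj (Fin.ext hc)), zero_mul]
        · simp
      · rw [hwge _ (by omega)]
        apply Finset.sum_eq_zero
        intro j _
        rw [if_neg (by omega), zero_mul]
      
    rw [h3] at h1
    rw [hwlt _ hmn, ← h1]
  -- zero tail (uses μ ≠ 0)
  have htail : ∀ d m, p ≤ m → n ≤ m + d → w m = 0 := by
    intro d
    induction d with
    | zero => intro m hm hnm; exact hwge m (by omega)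
    | succ d ih =>
      intro m hm hnm
      by_cases h : m < n
      · have h1 : w (m + 1) = 0 := ih (m + 1) (by omega) (by omega)
        have h2 := eqshift m h (by omega)
        rw [h1] at h2
        rcases mul_eq_zero.mp h2 with h3 | h3
        · exact absurd h3 hμ0
        · exact h3
      · exact hwge m (by omega)
  have hA : ∀ m, p ≤ m → w m = 0 := fun m hm => htail n m hm (by omega)
  -- geometric head
  have hB : ∀ m, m ≤ p - 1 → w m = μ ^ m * w 0 := by
    intro m
    induction m with
    | zero => intro _; simp
    | succ m ih =>
      intro hm
      have h1 := eqshift m (by omega) (by omega)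
      rw [ih (by omega)] at h1
      rw [← h1]; ring
  -- w 0 ≠ 0
  have hC : w 0 ≠ 0 := by
    intro h0
    apply hv.right
    funext i
    have hi : w (i : ℕ) = v i := by rw [hwlt _ i.isLt]
    by_cases h : (i : ℕ) ≤ p - 1
    · have := hB _ h
      rw [h0, mul_zero] at this
      rw [← hi, this]; rfl
    · have := hA (i : ℕ) (by omega)
      rw [← hi, this]; rfl
  -- row p-1
  have hpn1 : p - 1 < n := by omega
  have hrp := hrow ⟨p - 1, hpn1⟩
  have hent : ∀ j : Fin n, M ⟨p - 1, hpn1⟩ j =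
      if (j : ℕ) < p then ((a (p - 1 - (j : ℕ)) : ℂ)) else ((b (q - 1 - ((j : ℕ) - p)) : ℂ)) := by
    intro j
    simp only [hM, Matrix.map_apply, bigA, if_pos rfl]
    by_cases hjp : (j : ℕ) < p <;> simp [hjp]
  have hsum : (∑ j : Fin n, M ⟨p - 1, hpn1⟩ j * v j)
      = ∑ j ∈ Finset.range n, (if j < p then ((a (p - 1 - j) : ℂ)) else ((b (q - 1 - (j - p)) : ℂ))) * w j := by
    rw [← Fin.sum_univ_eq_sum_range (fun j => (if j < p then ((a (p - 1 - j) : ℂ)) else ((b (q - 1 - (j - p)) : ℂ))) * w j) n]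
    refine Finset.sum_congr rfl fun j _ => ?_
    rw [hent j, hwlt _ j.isLt]
  rw [hsum] at hrp
  have hsum2 : (∑ j ∈ Finset.range n, (if j < p then ((a (p - 1 - j) : ℂ)) else ((b (q - 1 - (j - p)) : ℂ))) * w j)
      = ∑ j ∈ Finset.range p, (a (p - 1 - j) : ℂ) * (μ ^ j * w 0) := by
    rw [← Finset.sum_subset (Finset.range_subset_range.mpr hpn)]
    · refine Finset.sum_congr rfl fun j hj => ?_
      have hjp : j < p := Finset.mem_range.mp hj
      rw [if_pos hjp, hB j (by omega)]
    · intro j _ hj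
      have hjp : p ≤ j := by simpa using hj
      rw [hA j hjp, mul_zero]
  rw [hsum2, ← hwlt _ hpn1, hB (p - 1) le_rfl] at hrp
  have hp1 : p - 1 + 1 = p := by omega
  have hrp2 : μ ^ p * w 0 = (∑ j ∈ Finset.range p, (a (p - 1 - j) : ℂ) * μ ^ j) * w 0 := by
    rw [Finset.sum_mul]
    have hmu : μ ^ p = μ ^ (p - 1) * μ := by conv_lhs => rw [← hp1, pow_succ]
    calc μ ^ p * w 0 = μ * (μ ^ (p - 1) * w 0) := by rw [hmu]; ring
      _ = ∑ j ∈ Finset.range p, (a (p - 1 - j) : ℂ) * (μ ^ j * w 0) := hrp.symm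
      _ = ∑ j ∈ Finset.range p, (a (p - 1 - j) : ℂ) * μ ^ j * w 0 :=
          Finset.sum_congr rfl fun j _ => by ring
  have hkey : μ ^ p = ∑ j ∈ Finset.range p, (a (p - 1 - j) : ℂ) * μ ^ j :=
    mul_right_cancel₀ hC hrp2
  have hrefl : (∑ j ∈ Finset.range p, (a (p - 1 - j) : ℂ) * μ ^ j)
      = ∑ k ∈ Finset.range p, (a k : ℂ) * μ ^ (p - 1 - k) := by
    rw [← Finset.sum_range_reflect (fun k => (a k : ℂ) * μ ^ (p - 1 - k)) p]
    refine Finset.sum_congr rfl fun j hj => ?_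
    have hjp : j < p := Finset.mem_range.mp hj
    have : p - 1 - (p - 1 - j) = j := by omega
    rw [this]
  rw [← hrefl, ← hkey, sub_self]

attribute [local instance] Matrix.linftyOpNormedRing Matrix.linftyOpNormedAlgebra

lemma lodm_decay {n : ℕ} (hn : 0 < n) (A : Matrix (Fin n) (Fin n) ℝ) {ρ0 : ℝ} (hρ0 : 0 < ρ0)
    (hspec : ∀ μ ∈ spectrum ℂ (A.map (fun x : ℝ => (x : ℂ))), ‖μ‖ < ρ0) :
    ∃ D r : ℝ, 0 < D ∧ 0 < r ∧ r < ρ0 ∧ ∀ k : ℕ, ‖A ^ k‖ ≤ D * r ^ k := by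
  haveI : Nonempty (Fin n) := ⟨⟨0, hn⟩⟩
  set M := A.map (fun x : ℝ => (x : ℂ)) with hM
  -- spectral radius strictly below ρ0
  have h1 : ∀ μ ∈ spectrum ℂ M, ‖μ‖₊ < ρ0.toNNReal := by
    intro μ hμ
    rw [← NNReal.coe_lt_coe, coe_nnnorm, Real.coe_toNNReal _ hρ0.le]
    exact hspec μ hμ
  have hs : spectralRadius ℂ M < (ρ0.toNNReal : ENNReal) :=
    spectrum.spectralRadius_lt_of_forall_lt_of_nonempty (spectrum.nonempty M) h1
  obtain ⟨r, hr0, hsr, hrr⟩ := ENNReal.lt_iff_exists_real_btwn.mp hs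
  have hrpos : 0 < r := ENNReal.ofReal_pos.mp (zero_le.trans_lt hsr)
  have hrρ0 : r < ρ0 := by
    have hrr' : ENNReal.ofReal r < ENNReal.ofReal ρ0 := hrr
    exact (ENNReal.ofReal_lt_ofReal_iff hρ0).mp hrr'
  -- Gelfand formula: eventual geometric bound
  have hg := spectrum.pow_nnnorm_pow_one_div_tendsto_nhds_spectralRadius M
  obtain ⟨N, hN⟩ := eventually_atTop.mp (hg.eventually_lt_const hsr)
  have hpow : ∀ k, N + 1 ≤ k → ‖M ^ k‖ ≤ r ^ k := by
    intro k hk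
    have hk0 : (0 : ℝ) < (k : ℝ) := by
      have : 0 < k := by omega
      exact_mod_cast this
    have h2 := (hN k (by omega)).le
    rw [← ENNReal.coe_rpow_of_nonneg _ (by positivity : (0:ℝ) ≤ 1 / (k:ℝ))] at h2
    have h2' : ‖M ^ k‖₊ ^ (1 / (k : ℝ)) ≤ r.toNNReal := ENNReal.coe_le_coe.mp h2
    have h3 : ‖M ^ k‖₊ ≤ r.toNNReal ^ (k : ℝ) := (NNReal.rpow_inv_le_iff hk0).mp (by rwa [one_div] at h2')
    rw [NNReal.rpow_natCast] at h3
    calc ‖M ^ k‖ = (‖M ^ k‖₊ : ℝ) := rfl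
      _ ≤ ((r.toNNReal ^ k : NNReal) : ℝ) := by exact_mod_cast h3
      _ = r ^ k := by rw [NNReal.coe_pow, Real.coe_toNNReal _ hrpos.le]
  -- uniform constant
  have hDex : ∃ D : ℝ, 0 < D ∧ ∀ k : ℕ, ‖M ^ k‖ ≤ D * r ^ k := by
    refine ⟨max 1 ((Finset.range (N + 1)).sup' ⟨0, by simp⟩ fun k => ‖M ^ k‖ / r ^ k),
      lt_of_lt_of_le one_pos (le_max_left _ _), fun k => ?_⟩
    by_cases hk : k ≤ N
    · have h4 : ‖M ^ k‖ / r ^ k ≤ (Finset.range (N + 1)).sup' ⟨0, by simp⟩ fun k => ‖M ^ k‖ / r ^ k :=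
        by
          have hkmem : k ∈ Finset.range (N + 1) := Finset.mem_range.mpr (by omega)
          exact Finset.le_sup' (fun k => ‖M ^ k‖ / r ^ k) hkmem
      have hrk : (0:ℝ) < r ^ k := by positivity
      calc ‖M ^ k‖ = ‖M ^ k‖ / r ^ k * r ^ k := by field_simp
        _ ≤ _ := by
            apply mul_le_mul_of_nonneg_right _ hrk.le
            exact le_trans h4 (le_max_right _ _)
    · have h4 := hpow k (by omega)
      calc ‖M ^ k‖ ≤ r ^ k := h4
        _ = 1 * r ^ k := (one_mul _).symm
        _ ≤ _ := by
            apply mul_le_mul_of_nonneg_right (le_max_left _ _) (by positivity)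
  obtain ⟨D, hD, hDk⟩ := hDex
  refine ⟨D, r, hD, hrpos, hrρ0, fun k => ?_⟩
  -- transfer the norm bound from ℂ to ℝ
  have hmap : M ^ k = (A ^ k).map (fun x : ℝ => (x : ℂ)) := by
    have h5 : ∀ B : Matrix (Fin n) (Fin n) ℝ, B.map (fun x : ℝ => (x : ℂ))
        = Complex.ofRealHom.mapMatrix B := fun B => rfl
    rw [hM, h5, h5, ← map_pow]
  have hnorm : ‖A ^ k‖ = ‖M ^ k‖ := by
    rw [hmap, Matrix.linfty_opNorm_def, Matrix.linfty_opNorm_def]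
    congr 1
    apply Finset.sup_congr rfl
    intro i _
    apply Finset.sum_congr rfl
    intro j _
    simp [Matrix.map_apply]
  rw [hnorm]
  exact hDk k

lemma lodm_summable {n : ℕ} (hn : 0 < n) (A : Matrix (Fin n) (Fin n) ℝ) (α : ℝ)
    (h1 : ∀ μ ∈ spectrum ℂ (A.map (fun x : ℝ => (x : ℂ))), ‖μ‖ < 1)
    (h2 : ∀ μ ∈ spectrum ℂ (A.map (fun x : ℝ => (x : ℂ))), ‖μ‖ < Real.exp (-α))
    (ob bb : Fin n → ℝ) (u : ℕ → ℝ) (C : ℝ) (hu : ∀ k : ℕ, |u k| ≤ C * Real.exp (α * k))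
    (i : Fin n) :
    Summable fun k : ℕ => |((A ^ k).mulVec (ob + u k • bb)) i| := by
  have hρ0 : 0 < min 1 (Real.exp (-α)) := lt_min one_pos (Real.exp_pos _)
  obtain ⟨D, r, hD, hr, hrρ0, hDr⟩ :=
    lodm_decay hn A hρ0 (fun μ hμ => lt_min (h1 μ hμ) (h2 μ hμ))
  have hr1 : r < 1 := lt_of_lt_of_le hrρ0 (min_le_left _ _)
  have hre : r * Real.exp α < 1 := by
    have h3 : r < Real.exp (-α) := lt_of_lt_of_le hrρ0 (min_le_right _ _)
    have h4 := mul_lt_mul_of_pos_right h3 (Real.exp_pos α)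
    rwa [Real.exp_neg, inv_mul_cancel₀ (Real.exp_pos α).ne'] at h4
  have key : ∀ k : ℕ, |((A ^ k).mulVec (ob + u k • bb)) i|
      ≤ D * ‖ob‖ * r ^ k + D * (C * ‖bb‖) * (r * Real.exp α) ^ k := by
    intro k
    have hb1 : |((A ^ k).mulVec (ob + u k • bb)) i| ≤ ‖A ^ k‖ * ‖ob + u k • bb‖ := by
      calc |((A ^ k).mulVec (ob + u k • bb)) i|
          = ‖((A ^ k).mulVec (ob + u k • bb)) i‖ := (Real.norm_eq_abs _).symm
        _ ≤ ‖(A ^ k).mulVec (ob + u k • bb)‖ := norm_le_pi_norm _ i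
        _ ≤ ‖A ^ k‖ * ‖ob + u k • bb‖ := Matrix.linfty_opNorm_mulVec _ _
    have hCk : 0 ≤ C * Real.exp (α * k) := le_trans (abs_nonneg (u k)) (hu k)
    have hb2 : ‖ob + u k • bb‖ ≤ ‖ob‖ + C * Real.exp (α * k) * ‖bb‖ := by
      calc ‖ob + u k • bb‖ ≤ ‖ob‖ + ‖u k • bb‖ := norm_add_le _ _
        _ = ‖ob‖ + |u k| * ‖bb‖ := by rw [norm_smul, Real.norm_eq_abs]
        _ ≤ ‖ob‖ + C * Real.exp (α * k) * ‖bb‖ := by nlinarith [norm_nonneg bb, hu k]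
    have hexp : Real.exp (α * k) = Real.exp α ^ k := by
      rw [mul_comm, Real.exp_nat_mul]
    calc |((A ^ k).mulVec (ob + u k • bb)) i| ≤ ‖A ^ k‖ * ‖ob + u k • bb‖ := hb1
      _ ≤ (D * r ^ k) * (‖ob‖ + C * Real.exp (α * k) * ‖bb‖) := by
          apply mul_le_mul (hDr k) hb2 (norm_nonneg _) (by positivity)
      _ = D * ‖ob‖ * r ^ k + D * (C * ‖bb‖) * (r ^ k * Real.exp (α * k)) := by ring
      _ = D * ‖ob‖ * r ^ k + D * (C * ‖bb‖) * (r * Real.exp α) ^ k := by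
          rw [hexp, mul_pow]
  apply Summable.of_nonneg_of_le (fun k => abs_nonneg _) key
  apply Summable.add
  · exact (summable_geometric_of_lt_one hr.le hr1).mul_left _
  · exact (summable_geometric_of_lt_one (by positivity) hre).mul_left _


/-- Under the root condition on `(a_1,...,a_p)`, the LODM state matrix `A` has
spectral radius `< 1`; consequently `Σ_k e_p^T A^k (ω̄ + u_{-k} b̄)` converges
absolutely for bounded inputs, and more generally for inputs growing at an
exponential rate `α < -log ρ` where `ρ` bounds the spectrum. -/
theorem stmt15 (p q : ℕ) (hp : 0 < p) (hq : 0 < q) (a b : ℕ → ℝ)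
    (hroot : ∀ z : ℂ,
      z ^ p - ∑ k ∈ Finset.range p, (a k : ℂ) * z ^ (p - 1 - k) = 0 → ‖z‖ < 1) :
    (∀ μ : ℂ, μ ∈ spectrum ℂ ((bigA p q a b).map (fun x : ℝ => (x : ℂ))) →
      ‖μ‖ < 1) ∧
    (∀ ob bb : Fin (p + q - 1) → ℝ, ∀ u : ℕ → ℝ, (∃ M : ℝ, ∀ k, |u k| ≤ M) →
      Summable fun k : ℕ =>
        |(((bigA p q a b) ^ k).mulVec (ob + u k • bb)) ⟨p - 1, by omega⟩|) ∧
    (∀ ρ : ℝ, 0 < ρ →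
      (∀ μ : ℂ, μ ∈ spectrum ℂ ((bigA p q a b).map (fun x : ℝ => (x : ℂ))) →
        ‖μ‖ ≤ ρ) →
      ∀ α : ℝ, α < -Real.log ρ →
        ∀ ob bb : Fin (p + q - 1) → ℝ, ∀ u : ℕ → ℝ,
          (∃ C : ℝ, ∀ k : ℕ, |u k| ≤ C * Real.exp (α * k)) →
          Summable fun k : ℕ =>
            |(((bigA p q a b) ^ k).mulVec (ob + u k • bb)) ⟨p - 1, by omega⟩|) := by
  have hn : 0 < p + q - 1 := by omega
  have h1 : ∀ μ ∈ spectrum ℂ ((bigA p q a b).map (fun x : ℝ => (x : ℂ))),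
      ‖μ‖ < 1 := by
    intro μ hμ
    by_cases h0 : μ = 0
    · simp [h0]
    · exact hroot μ (lodm_spec_poly p q hp hq a b μ hμ h0)
  refine ⟨h1, ?_, ?_⟩
  · rintro ob bb u ⟨M, hM⟩
    exact lodm_summable hn _ 0 h1 (by simpa using h1) ob bb u M
      (fun k => by simpa using hM k) _
  · rintro ρ hρ hspec α hα ob bb u ⟨C, hC⟩
    have h2 : ∀ μ ∈ spectrum ℂ ((bigA p q a b).map (fun x : ℝ => (x : ℂ))),
        ‖μ‖ < Real.exp (-α) := by
      intro μ hμ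
      refine lt_of_le_of_lt (hspec μ hμ) ?_
      have h3 : Real.log ρ < -α := by linarith
      calc ρ = Real.exp (Real.log ρ) := (Real.exp_log hρ).symm
        _ < Real.exp (-α) := Real.exp_lt_exp.mpr h3
    exact lodm_summable hn _ α h1 h2 ob bb u C hC _
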